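/- Let G be a graph, M a maximum matching of G, and H an M-Tposy of G. Then for every vertex v of H there exists a non-trivial M-alternating path in H from v to the base of one of the two blossoms of H that starts and ends with edges of M. -/

import Mathlib

open SimpleGraph

variable {V : Type*} [DecidableEq V]

/-- `M` is a matching of `G`: a set of edges of `G`, pairwise not sharing a vertex. -/
def IsMatching' (G : SimpleGraph V) (M : Finset (Sym2 V)) : Prop :=
  (↑M : Set (Sym2 V)) ⊆ G.edgeSet ∧
    ∀ e ∈ M, ∀ f ∈ M, e ≠ f → ∀ v : V, ¬(v ∈ e ∧ v ∈ f)

/-- `M` is a maximum matching of `G`. -/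
def IsMaxMatching (G : SimpleGraph V) (M : Finset (Sym2 V)) : Prop :=
  IsMatching' G M ∧ ∀ M' : Finset (Sym2 V), IsMatching' G M' → M'.card ≤ M.card

/-- The vertex `v` is matched (saturated) by `M`. -/
def MatchedBy (M : Finset (Sym2 V)) (v : V) : Prop :=
  ∃ e ∈ M, v ∈ e

/-- A walk is `M`-alternating: consecutive edges alternate between `M` and its complement. -/
def IsAltWalk {G : SimpleGraph V} (M : Finset (Sym2 V)) {u v : V} (w : G.Walk u v) : Prop :=
  w.edges.Chain' (fun e f => e ∈ M ↔ f ∉ M)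

/-- The first edge of the walk belongs to `M`. -/
def StartsMatched {G : SimpleGraph V} (M : Finset (Sym2 V)) {u v : V} (w : G.Walk u v) : Prop :=
  ∃ e, w.edges.head? = some e ∧ e ∈ M

/-- The last edge of the walk belongs to `M`. -/
def EndsMatched {G : SimpleGraph V} (M : Finset (Sym2 V)) {u v : V} (w : G.Walk u v) : Prop :=
  ∃ e, w.edges.getLast? = some e ∧ e ∈ M

/-- The first edge of the walk does not belong to `M`. -/
def StartsUnmatched {G : SimpleGraph V} (M : Finset (Sym2 V)) {u v : V} (w : G.Walk u v) : Prop :=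
  ∃ e, w.edges.head? = some e ∧ e ∉ M

/-- The last edge of the walk does not belong to `M`. -/
def EndsUnmatched {G : SimpleGraph V} (M : Finset (Sym2 V)) {u v : V} (w : G.Walk u v) : Prop :=
  ∃ e, w.edges.getLast? = some e ∧ e ∉ M

/-- An `M`-blossom with base `b`: an odd cycle of length `2k+1` containing exactly `k`
edges of `M`, alternating, whose base `b` is not matched within the cycle. -/
def IsBlossom (G : SimpleGraph V) (M : Finset (Sym2 V)) {b : V} (c : G.Walk b b) : Prop :=
  c.IsCycle ∧ Odd c.length ∧ IsAltWalk M c ∧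
    2 * (c.edges.toFinset ∩ M).card + 1 = c.length ∧
    ∀ e ∈ c.edges, e ∈ M → b ∉ e

/-- An `M`-flower: an `M`-blossom with base `b` together with an even `M`-alternating
stem from `b` to an `M`-unmatched vertex `u`, sharing only the base with the blossom. -/
def IsFlower (G : SimpleGraph V) (M : Finset (Sym2 V)) {b u : V}
    (c : G.Walk b b) (s : G.Walk b u) : Prop :=
  IsBlossom G M c ∧ s.IsPath ∧ Even s.length ∧ IsAltWalk M s ∧
    ¬ MatchedBy M u ∧ ∀ x ∈ s.support, x ∈ c.support → x = b

/-- An `M`-posy: two distinct `M`-blossoms joined by an odd `M`-alternating path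
between their bases, starting and ending with matched edges. -/
def IsPosy (G : SimpleGraph V) (M : Finset (Sym2 V)) {b₁ b₂ : V}
    (c₁ : G.Walk b₁ b₁) (c₂ : G.Walk b₂ b₂) (p : G.Walk b₁ b₂) : Prop :=
  IsBlossom G M c₁ ∧ IsBlossom G M c₂ ∧ (b₁ ≠ b₂ ∨ c₁.edges ≠ c₂.edges) ∧
    p.IsPath ∧ Odd p.length ∧ IsAltWalk M p ∧ StartsMatched M p ∧ EndsMatched M p

/-- An `M`-Tposy: a posy whose connecting path is internally disjoint from both blossoms. -/
def IsTposy (G : SimpleGraph V) (M : Finset (Sym2 V)) {b₁ b₂ : V}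
    (c₁ : G.Walk b₁ b₁) (c₂ : G.Walk b₂ b₂) (p : G.Walk b₁ b₂) : Prop :=
  IsPosy G M c₁ c₂ p ∧
    ∀ x ∈ p.support, x ≠ b₁ → x ≠ b₂ → x ∉ c₁.support ∧ x ∉ c₂.support

/-- An `M`-Jposy: two (not necessarily distinct) `M`-blossoms joined by an odd
`M`-alternating walk between their bases, starting and ending with matched edges. -/
def IsJposy (G : SimpleGraph V) (M : Finset (Sym2 V)) {b₁ b₂ : V}
    (c₁ : G.Walk b₁ b₁) (c₂ : G.Walk b₂ b₂) (w : G.Walk b₁ b₂) : Prop :=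
  IsBlossom G M c₁ ∧ IsBlossom G M c₂ ∧
    Odd w.length ∧ IsAltWalk M w ∧ StartsMatched M w ∧ EndsMatched M w

/-- An `M`-Jflower: an `M`-blossom together with an `M`-alternating walk from its base
to an `M`-unmatched vertex. -/
def IsJflower (G : SimpleGraph V) (M : Finset (Sym2 V)) {b u : V}
    (c : G.Walk b b) (w : G.Walk b u) : Prop :=
  IsBlossom G M c ∧ IsAltWalk M w ∧ ¬ MatchedBy M u

/-- The vertex `x` belongs to some `M`-flower. -/
def InFlower (G : SimpleGraph V) (M : Finset (Sym2 V)) (x : V) : Prop :=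
  ∃ (b u : V) (c : G.Walk b b) (s : G.Walk b u),
    IsFlower G M c s ∧ (x ∈ c.support ∨ x ∈ s.support)

/-- The vertex `x` belongs to some `M`-posy. -/
def InPosy (G : SimpleGraph V) (M : Finset (Sym2 V)) (x : V) : Prop :=
  ∃ (b₁ b₂ : V) (c₁ : G.Walk b₁ b₁) (c₂ : G.Walk b₂ b₂) (p : G.Walk b₁ b₂),
    IsPosy G M c₁ c₂ p ∧ (x ∈ c₁.support ∨ x ∈ c₂.support ∨ x ∈ p.support)

/-- The vertex `x` belongs to some `M`-Tposy. -/
def InTposy (G : SimpleGraph V) (M : Finset (Sym2 V)) (x : V) : Prop :=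
  ∃ (b₁ b₂ : V) (c₁ : G.Walk b₁ b₁) (c₂ : G.Walk b₂ b₂) (p : G.Walk b₁ b₂),
    IsTposy G M c₁ c₂ p ∧ (x ∈ c₁.support ∨ x ∈ c₂.support ∨ x ∈ p.support)

/-- The vertex `x` belongs to some `M`-Jposy. -/
def InJposy (G : SimpleGraph V) (M : Finset (Sym2 V)) (x : V) : Prop :=
  ∃ (b₁ b₂ : V) (c₁ : G.Walk b₁ b₁) (c₂ : G.Walk b₂ b₂) (w : G.Walk b₁ b₂),
    IsJposy G M c₁ c₂ w ∧ (x ∈ c₁.support ∨ x ∈ c₂.support ∨ x ∈ w.support)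

/-- The vertex `x` belongs to some `M`-Jflower. -/
def InJflower (G : SimpleGraph V) (M : Finset (Sym2 V)) (x : V) : Prop :=
  ∃ (b u : V) (c : G.Walk b b) (w : G.Walk b u),
    IsJflower G M c w ∧ (x ∈ c.support ∨ x ∈ w.support)

/-- The independence number of `G`. -/
noncomputable def indepNum (G : SimpleGraph V) : ℕ :=
  sSup {n | ∃ s : Finset V, (∀ u ∈ s, ∀ w ∈ s, ¬ G.Adj u w) ∧ s.card = n}

/-- The matching number of `G`. -/
noncomputable def matchNum (G : SimpleGraph V) : ℕ :=
  sSup {n | ∃ M : Finset (Sym2 V), IsMatching' G M ∧ M.card = n}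

/-- `G` is a König–Egerváry graph: `α(G) + μ(G) = |V(G)|`. -/
def IsKE (G : SimpleGraph V) [Fintype V] : Prop :=
  _root_.indepNum G + matchNum G = Fintype.card V

/-!
Along an alternating walk whose first edge is matched, the last edge is matched exactly when
the length is odd. A vertex `x` of the connecting path `p` splits it into two pieces, and the
piece of odd length, oriented away from `x`, is the required path. A vertex `x ≠ b` of a
blossom with base `b` splits the cycle into two arcs, whose edges at `b` are unmatched; the arc
from `x` to `b` of even length therefore starts with a matched and ends with an unmatched edge,
and followed by `p` it reaches the other base `b'`. This is a path because `p` meets the blossom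
only in `b`: were `b'` on the blossom, its matched edge there would be the last edge of `p`,
whose other end would then be a second common vertex.
-/

section Alternating

omit [DecidableEq V]

variable {G : SimpleGraph V} {M : Finset (Sym2 V)}

lemma IsMatching'.eq_of_mem {e f : Sym2 V} {v : V} (hM : IsMatching' G M) (he : e ∈ M)
    (hf : f ∈ M) (hve : v ∈ e) (hvf : v ∈ f) : e = f := by
  by_contra hef
  exact hM.2 e he f hf hef v ⟨hve, hvf⟩

lemma getLast_mem_iff_of_isChain_alt {l : List (Sym2 V)}
    (h : l.IsChain (fun e f => e ∈ M ↔ f ∉ M)) (hl : l ≠ []) :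
    l.getLast hl ∈ M ↔ (l.head hl ∈ M ↔ Odd l.length) := by
  induction l with
  | nil => exact absurd rfl hl
  | cons a l ih =>
    rcases l with _ | ⟨b, l⟩
    · simp
    · rw [List.isChain_cons_cons] at h
      have := ih h.2 (List.cons_ne_nil _ _)
      simp only [List.getLast_cons_cons, List.head_cons, List.length_cons] at this ⊢
      rw [Nat.odd_add_one]
      tauto

lemma StartsMatched.exists_start_mem {u v : V} {w : G.Walk u v} (h : StartsMatched M w) :
    ∃ e ∈ w.edges, e ∈ M ∧ u ∈ e := by
  cases w with
  | nil => simp [StartsMatched] at h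
  | cons _ w =>
    obtain ⟨e, he, heM⟩ := h
    simp only [Walk.edges_cons, List.head?_cons, Option.some.injEq] at he
    subst he
    exact ⟨_, List.mem_cons_self, heM, Sym2.mem_mk_left _ _⟩

lemma StartsMatched.length_pos {u v : V} {w : G.Walk u v} (h : StartsMatched M w) :
    0 < w.length := by
  obtain ⟨e, he, -⟩ := h.exists_start_mem
  rw [← w.length_edges]
  exact List.length_pos_of_mem he

@[simp]
lemma startsMatched_reverse {u v : V} {w : G.Walk u v} :
    StartsMatched M w.reverse ↔ EndsMatched M w := by
  simp [StartsMatched, EndsMatched, List.head?_reverse]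

@[simp]
lemma endsMatched_reverse {u v : V} {w : G.Walk u v} :
    EndsMatched M w.reverse ↔ StartsMatched M w := by
  simp [StartsMatched, EndsMatched, List.getLast?_reverse]

lemma EndsMatched.exists_end_mem {u v : V} {w : G.Walk u v} (h : EndsMatched M w) :
    ∃ e ∈ w.edges, e ∈ M ∧ v ∈ e := by
  simpa using (startsMatched_reverse.2 h).exists_start_mem

lemma startsMatched_append {u v w : V} {p : G.Walk u v} {q : G.Walk v w} (hp : 0 < p.length) :
    StartsMatched M (p.append q) ↔ StartsMatched M p := by
  cases p with
  | nil => simp at hp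
  | cons => simp [StartsMatched]

lemma endsMatched_append {u v w : V} {p : G.Walk u v} {q : G.Walk v w} (hq : 0 < q.length) :
    EndsMatched M (p.append q) ↔ EndsMatched M q := by
  rw [← startsMatched_reverse, Walk.reverse_append,
    startsMatched_append (by rwa [Walk.length_reverse]), startsMatched_reverse]

lemma isAltWalk_iff {u v : V} {w : G.Walk u v} :
    IsAltWalk M w ↔ w.edges.IsChain (fun e f => e ∈ M ↔ f ∉ M) :=
  Iff.rfl

lemma IsAltWalk.reverse {u v : V} {w : G.Walk u v} (h : IsAltWalk M w) :
    IsAltWalk M w.reverse := by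
  rw [isAltWalk_iff, Walk.edges_reverse, List.isChain_reverse]
  exact (isAltWalk_iff.1 h).imp fun _ _ => by tauto

lemma IsAltWalk.of_append_left {u v w : V} {p : G.Walk u v} {q : G.Walk v w}
    (h : IsAltWalk M (p.append q)) : IsAltWalk M p := by
  rw [isAltWalk_iff, Walk.edges_append] at h
  exact h.left_of_append

lemma IsAltWalk.of_append_right {u v w : V} {p : G.Walk u v} {q : G.Walk v w}
    (h : IsAltWalk M (p.append q)) : IsAltWalk M q := by
  rw [isAltWalk_iff, Walk.edges_append] at h
  exact h.right_of_append

lemma IsAltWalk.append {u v w : V} {p : G.Walk u v} {q : G.Walk v w} (hp : IsAltWalk M p)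
    (hq : IsAltWalk M q) (hpe : ¬EndsMatched M p) (hqs : StartsMatched M q) :
    IsAltWalk M (p.append q) := by
  rw [isAltWalk_iff, Walk.edges_append]
  refine (isAltWalk_iff.1 hp).append hq fun e he f hf => ?_
  obtain ⟨f', hf', hf'M⟩ := hqs
  rw [hf', Option.mem_some_iff] at hf
  subst hf
  exact ⟨fun heM => absurd ⟨e, he, heM⟩ hpe, fun h => absurd hf'M h⟩

lemma IsAltWalk.endsMatched_iff {u v : V} {w : G.Walk u v} (h : IsAltWalk M w)
    (hw : 0 < w.length) : EndsMatched M w ↔ (StartsMatched M w ↔ Odd w.length) := by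
  have hne : w.edges ≠ [] := List.ne_nil_of_length_pos (by rwa [w.length_edges])
  simp only [EndsMatched, StartsMatched, List.getLast?_eq_some_getLast hne,
    List.head?_eq_some_head hne, Option.some.injEq, exists_eq_left', ← w.length_edges]
  exact getLast_mem_iff_of_isChain_alt h hne

lemma SimpleGraph.Walk.IsPath.append {u v w : V} {p : G.Walk u v} {q : G.Walk v w}
    (hp : p.IsPath) (hq : q.IsPath) (hpq : ∀ y ∈ p.support, y ∈ q.support → y = v) :
    (p.append q).IsPath := by
  rw [Walk.isPath_def, Walk.support_append]
  refine hp.support_nodup.append (hq.support_nodup.sublist (List.tail_sublist _)) ?_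
  intro y hyp hyq
  obtain rfl := hpq y hyp (List.mem_of_mem_tail hyq)
  rw [Walk.isPath_def, ← q.cons_tail_support, List.nodup_cons] at hq
  exact hq.1 hyq

def IsMMPath (M : Finset (Sym2 V)) {u v : V} (q : G.Walk u v) : Prop :=
  q.IsPath ∧ IsAltWalk M q ∧ StartsMatched M q ∧ EndsMatched M q

lemma IsMMPath.reverse {u v : V} {q : G.Walk u v} (hq : IsMMPath M q) :
    IsMMPath M q.reverse :=
  ⟨hq.1.reverse, hq.2.1.reverse, startsMatched_reverse.2 hq.2.2.2,
    endsMatched_reverse.2 hq.2.2.1⟩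

end Alternating

section Blossom

variable {G : SimpleGraph V} {M : Finset (Sym2 V)}

lemma IsMMPath.exists_subpath {u v x : V} {p : G.Walk u v} (hp : IsMMPath M p)
    (hx : x ∈ p.support) :
    ∃ (b : V) (q : G.Walk x b), (b = u ∨ b = v) ∧ IsMMPath M q ∧ q.edges ⊆ p.edges := by
  obtain ⟨hP, hA, hS, hE⟩ := hp
  have hodd : Odd p.length := by
    have := hA.endsMatched_iff hS.length_pos
    tauto
  have hspec := p.take_spec hx
  set t := p.takeUntil x hx
  set d := p.dropUntil x hx
  have hlen : t.length + d.length = p.length := by rw [← Walk.length_append, hspec]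
  rw [← hspec] at hA hS hE
  rcases Nat.even_or_odd t.length with ht | ht
  · have hd : Odd d.length := by
      rw [← hlen] at hodd
      exact (Nat.odd_add'.1 hodd).2 ht
    have hdE : EndsMatched M d := (endsMatched_append hd.pos).1 hE
    have hdS : StartsMatched M d := by
      have := hA.of_append_right.endsMatched_iff hd.pos
      tauto
    exact ⟨v, d, .inr rfl, ⟨hP.dropUntil hx, hA.of_append_right, hdS, hdE⟩,
      p.edges_dropUntil_subset_edges hx⟩
  · have htS : StartsMatched M t := (startsMatched_append ht.pos).1 hS
    have htE : EndsMatched M t := by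
      have := hA.of_append_left.endsMatched_iff ht.pos
      tauto
    refine ⟨u, t.reverse, .inl rfl,
      IsMMPath.reverse ⟨hP.takeUntil hx, hA.of_append_left, htS, htE⟩, ?_⟩
    rw [Walk.edges_reverse]
    exact List.reverse_subset.2 (p.edges_takeUntil_subset_edges hx)

lemma IsBlossom.exists_segment {b x : V} {c : G.Walk b b} (hB : IsBlossom G M c)
    (hx : x ∈ c.support) (hxb : x ≠ b) :
    ∃ s : G.Walk x b, s.IsPath ∧ IsAltWalk M s ∧ StartsMatched M s ∧ ¬EndsMatched M s ∧
      s.edges ⊆ c.edges ∧ s.support ⊆ c.support := by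
  obtain ⟨hC, hodd, hA, -, hbase⟩ := hB
  have hspec := c.take_spec hx
  set t := c.takeUntil x hx
  set d := c.dropUntil x hx
  have hlen : t.length + d.length = c.length := by rw [← Walk.length_append, hspec]
  have ht0 : 0 < t.length := Nat.pos_of_ne_zero fun h => hxb (t.eq_of_length_eq_zero h).symm
  have hd0 : 0 < d.length := Nat.pos_of_ne_zero fun h => hxb (d.eq_of_length_eq_zero h)
  have htS : ¬StartsMatched M t := fun h => by
    obtain ⟨e, he, heM, hbe⟩ := h.exists_start_mem
    exact hbase e (c.edges_takeUntil_subset_edges hx he) heM hbe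
  have hdE : ¬EndsMatched M d := fun h => by
    obtain ⟨e, he, heM, hbe⟩ := h.exists_end_mem
    exact hbase e (c.edges_dropUntil_subset_edges hx he) heM hbe
  rw [← hspec] at hA
  rcases Nat.even_or_odd t.length with ht | ht
  · have htE : EndsMatched M t := by
      have := hA.of_append_left.endsMatched_iff ht0
      have := Nat.not_odd_iff_even.2 ht
      tauto
    refine ⟨t.reverse, (hC.isPath_takeUntil hx).reverse, hA.of_append_left.reverse,
      startsMatched_reverse.2 htE, by rwa [endsMatched_reverse], ?_, ?_⟩
    · rw [Walk.edges_reverse, List.reverse_subset]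
      exact c.edges_takeUntil_subset_edges hx
    · rw [Walk.support_reverse, List.reverse_subset]
      exact c.support_takeUntil_subset_support hx
  · have hd : ¬Odd d.length := by
      rw [← hlen] at hodd
      exact Nat.not_odd_iff_even.2 ((Nat.odd_add.1 hodd).1 ht)
    have hdS : StartsMatched M d := by
      have := hA.of_append_right.endsMatched_iff hd0
      tauto
    have hC' : (t.append d).IsCycle := by rwa [hspec]
    refine ⟨d, hC'.isPath_of_append_right (Walk.not_nil_of_ne hxb.symm),
      hA.of_append_right, hdS, hdE, c.edges_dropUntil_subset_edges hx,
      c.support_dropUntil_subset_support hx⟩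

lemma IsBlossom.exists_mem_edges_of_mem_support {b y : V} {c : G.Walk b b}
    (hB : IsBlossom G M c) (hy : y ∈ c.support) (hyb : y ≠ b) :
    ∃ e ∈ c.edges, e ∈ M ∧ y ∈ e := by
  obtain ⟨s, -, -, hS, -, hsc, -⟩ := hB.exists_segment hy hyb
  obtain ⟨e, he, heM, hye⟩ := hS.exists_start_mem
  exact ⟨e, hsc he, heM, hye⟩

lemma IsBlossom.end_notMem_support {b b' : V} {c : G.Walk b b} {p : G.Walk b b'}
    (hM : IsMatching' G M) (hB : IsBlossom G M c) (hp : IsMMPath M p)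
    (hdisj : ∀ y ∈ p.support, y ≠ b → y ≠ b' → y ∉ c.support) :
    b' ∉ c.support := by
  obtain ⟨hP, -, hS, hE⟩ := hp
  intro hb'
  have hbb' : b' ≠ b := by
    rintro rfl
    exact hS.length_pos.ne' (Walk.length_eq_zero_iff.2 (Walk.isPath_iff_nil.1 hP))
  obtain ⟨e, he, heM, hb'e⟩ := hB.exists_mem_edges_of_mem_support hb' hbb'
  obtain ⟨f, hf, hfM, hb'f⟩ := hE.exists_end_mem
  obtain rfl := hM.eq_of_mem heM hfM hb'e hb'f
  obtain ⟨a, rfl⟩ := Sym2.mem_iff_exists.1 hb'e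
  have hab : a ≠ b := fun h => hB.2.2.2.2 _ he heM (h ▸ Sym2.mem_mk_right _ _)
  have hab' : a ≠ b' := (p.adj_of_mem_edges hf).ne.symm
  exact hdisj a (p.snd_mem_support_of_mem_edges hf) hab hab' (c.snd_mem_support_of_mem_edges he)

lemma IsBlossom.exists_mmPath_of_mem_support {b b' x : V} {c : G.Walk b b} {p : G.Walk b b'}
    (hM : IsMatching' G M) (hB : IsBlossom G M c) (hp : IsMMPath M p)
    (hdisj : ∀ y ∈ p.support, y ≠ b → y ≠ b' → y ∉ c.support) (hx : x ∈ c.support) :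
    ∃ q : G.Walk x b', IsMMPath M q ∧ q.edges ⊆ c.edges ++ p.edges := by
  by_cases hxb : x = b
  · subst hxb
    exact ⟨p, hp, List.subset_append_right _ _⟩
  obtain ⟨s, hsP, hsA, hsS, hsE, hsc, hss⟩ := hB.exists_segment hx hxb
  have hb' := hB.end_notMem_support hM hp hdisj
  obtain ⟨hP, hA, hS, hE⟩ := hp
  refine ⟨s.append p, ⟨hsP.append hP ?_, hsA.append hA hsE hS,
    (startsMatched_append hsS.length_pos).2 hsS, (endsMatched_append hS.length_pos).2 hE⟩, ?_⟩
  · intro y hys hyp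
    by_contra hyb
    exact hdisj y hyp hyb (fun h => hb' (h ▸ hss hys)) (hss hys)
  · rw [Walk.edges_append]
    exact List.append_subset.2 ⟨List.Subset.trans hsc (List.subset_append_left _ _),
      List.subset_append_right _ _⟩

end Blossom

/-- In an `M`-Tposy `H`, every vertex of `H` is joined inside `H` to the
base of one of the two blossoms by a non-trivial `mm`-alternating path. -/
theorem stmt_11 {V : Type*} [DecidableEq V] (G : SimpleGraph V) (M : Finset (Sym2 V))
    (hM : IsMaxMatching G M) {b₁ b₂ : V}
    (c₁ : G.Walk b₁ b₁) (c₂ : G.Walk b₂ b₂) (p : G.Walk b₁ b₂)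
    (hT : IsTposy G M c₁ c₂ p) (x : V)
    (hx : x ∈ c₁.support ∨ x ∈ c₂.support ∨ x ∈ p.support) :
    ∃ (b' : V) (q : G.Walk x b'), (b' = b₁ ∨ b' = b₂) ∧ 0 < q.length ∧
      q.IsPath ∧ IsAltWalk M q ∧ StartsMatched M q ∧ EndsMatched M q ∧
      ∀ e ∈ q.edges, e ∈ c₁.edges ∨ e ∈ c₂.edges ∨ e ∈ p.edges := by
  obtain ⟨⟨hB₁, hB₂, -, hP, -, hA, hS, hE⟩, hdisj⟩ := hT
  have hp : IsMMPath M p := ⟨hP, hA, hS, hE⟩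
  suffices ∃ (b' : V) (q : G.Walk x b'), (b' = b₁ ∨ b' = b₂) ∧ IsMMPath M q ∧
      ∀ e ∈ q.edges, e ∈ c₁.edges ∨ e ∈ c₂.edges ∨ e ∈ p.edges by
    obtain ⟨b', q, hb', ⟨hqP, hqA, hqS, hqE⟩, hq⟩ := this
    exact ⟨b', q, hb', hqS.length_pos, hqP, hqA, hqS, hqE, hq⟩
  rcases hx with hx | hx | hx
  · obtain ⟨q, hq, hqe⟩ := hB₁.exists_mmPath_of_mem_support hM.1 hp
      (fun y hy h₁ h₂ => (hdisj y hy h₁ h₂).1) hx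
    exact ⟨b₂, q, .inr rfl, hq, fun e he => (List.mem_append.1 (hqe he)).imp_right Or.inr⟩
  · obtain ⟨q, hq, hqe⟩ := hB₂.exists_mmPath_of_mem_support hM.1 hp.reverse
      (fun y hy h₂ h₁ => (hdisj y (by simpa using hy) h₁ h₂).2) hx
    exact ⟨b₁, q, .inl rfl, hq, fun e he => Or.inr (by simpa using hqe he)⟩
  · obtain ⟨b', q, hb', hq, hqe⟩ := hp.exists_subpath hx
    exact ⟨b', q, hb', hq, fun e he => Or.inr (Or.inr (hqe he))⟩
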